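/- Let G be a graph with no induced net, 4-wheel, 5-wheel, tent, 4-tent, k-net for k ≥ 2, C_4*, and G_1, let C = v_1...v_n v_1 (n ≥ 4) be a chordless cycle, and define A_i, O_i, B_i with respect to C as in the paper. Then there do not exist two vertices u, v ∈ A_i that are the two internal vertices of an induced P_4 of G[A_i ∪ O_i ∪ B_i]. -/

import Mathlib

open SimpleGraph

/-- The circle (of circumference 1), as the additive circle `ℝ / ℤ`. -/
abbrev Circ : Type := AddCircle (1 : ℝ)

/-- The closed arc of the circle obtained by projecting the real interval `[p.1, p.2]`. -/
def arcIcc (p : ℝ × ℝ) : Set Circ := (fun x : ℝ => (x : Circ)) '' Set.Icc p.1 p.2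

/-- `M` is a circular-arc model of the graph `G`: each vertex gets a (nonempty, closed) arc,
and two distinct vertices are adjacent iff their arcs intersect. -/
def IsCAModel {V : Type*} (G : SimpleGraph V) (M : V → ℝ × ℝ) : Prop :=
  (∀ v, (M v).1 ≤ (M v).2) ∧
  ∀ u v : V, u ≠ v → (G.Adj u v ↔ (arcIcc (M u) ∩ arcIcc (M v)).Nonempty)

/-- A circular-arc graph: the intersection graph of a finite set of arcs on a circle. -/
def IsCircularArcGraph {V : Type*} [Finite V] (G : SimpleGraph V) : Prop :=
  ∃ M : V → ℝ × ℝ, IsCAModel G M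

/-- A normal Helly circular-arc graph: the intersection graph of a finite set of arcs
on a circle, no three of which together cover the circle. -/
def IsNHCAGraph {V : Type*} [Finite V] (G : SimpleGraph V) : Prop :=
  ∃ M : V → ℝ × ℝ, IsCAModel G M ∧
    ∀ u v w : V, u ≠ v → u ≠ w → v ≠ w →
      arcIcc (M u) ∪ arcIcc (M v) ∪ arcIcc (M w) ≠ Set.univ

/-- `M` is an interval model of `G`: closed real intervals, adjacency iff intersection. -/
def IsIntervalModel {V : Type*} (G : SimpleGraph V) (M : V → ℝ × ℝ) : Prop :=
  (∀ v, (M v).1 ≤ (M v).2) ∧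
  ∀ u v : V, u ≠ v →
    (G.Adj u v ↔ (Set.Icc (M u).1 (M u).2 ∩ Set.Icc (M v).1 (M v).2).Nonempty)

/-- An interval graph: the intersection graph of a finite set of intervals on a line. -/
def IsIntervalGraph {V : Type*} [Finite V] (G : SimpleGraph V) : Prop :=
  ∃ M : V → ℝ × ℝ, IsIntervalModel G M

/-- The chordless path `P_m` on `m` vertices. -/
def pathG (m : ℕ) : SimpleGraph (Fin m) :=
  SimpleGraph.fromRel (fun i j => i.val + 1 = j.val)

/-- The chordless cycle `C_n` on `n` vertices (intended for `n ≥ 3`). -/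
def cycG (n : ℕ) : SimpleGraph (Fin n) :=
  SimpleGraph.fromRel (fun i j => (i.val + 1) % n = j.val)

/-- `G` contains an induced copy of `H`. -/
def HasInduced {W V : Type*} (H : SimpleGraph W) (G : SimpleGraph V) : Prop :=
  Nonempty (H ↪g G)

/-- Add one isolated vertex to a graph. -/
def addIsolated {V : Type*} (G : SimpleGraph V) : SimpleGraph (Option V) :=
  SimpleGraph.fromRel (fun u v => ∃ a b, u = some a ∧ v = some b ∧ G.Adj a b)

/-- Add one universal vertex to a graph. -/
def addUniversal {V : Type*} (G : SimpleGraph V) : SimpleGraph (Option V) :=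
  SimpleGraph.fromRel (fun u v => (∃ a b, u = some a ∧ v = some b ∧ G.Adj a b) ∨ u = none)

/-- `C_k^*`: the chordless cycle `C_k` plus an isolated vertex. -/
def cycStar (k : ℕ) : SimpleGraph (Option (Fin k)) := addIsolated (cycG k)

/-- The `k`-wheel: the chordless cycle `C_k` plus a universal vertex. -/
def wheelG (k : ℕ) : SimpleGraph (Option (Fin k)) := addUniversal (cycG k)

/-- The bipartite claw: `K_{1,3}` with every edge subdivided once. -/
def bipartiteClaw : SimpleGraph (Fin 7) :=
  SimpleGraph.fromEdgeSet {s(0,1), s(0,2), s(0,3), s(1,4), s(2,5), s(3,6)}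

/-- The umbrella: a path `0-1-2-3-4`, a hub `5` adjacent to all path vertices,
and a vertex `6` adjacent only to the middle vertex `2` of the path. -/
def umbrella : SimpleGraph (Fin 7) :=
  SimpleGraph.fromEdgeSet
    {s(0,1), s(1,2), s(2,3), s(3,4), s(5,0), s(5,1), s(5,2), s(5,3), s(5,4), s(6,2)}

/-- The net (= 2-net): a triangle with one pendant vertex at each corner. -/
def netG : SimpleGraph (Fin 6) :=
  SimpleGraph.fromEdgeSet {s(0,1), s(1,2), s(2,0), s(3,0), s(4,1), s(5,2)}

/-- The tent (= 3-tent = 3-sun). -/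
def tentG : SimpleGraph (Fin 6) :=
  SimpleGraph.fromEdgeSet
    {s(0,1), s(1,2), s(2,0), s(3,0), s(3,1), s(4,1), s(4,2), s(5,2), s(5,0)}

/-- The `k`-net (for `k ≥ 2`), with `k + 4` vertices: a chordless path
`p_0, …, p_k` (indices `0, …, k`), a vertex `q = k+1` adjacent to `p_0, …, p_{k-1}`,
a pendant `r = k+2` on `q`, and a pendant `t = k+3` on `p_0`. -/
def kNet (k : ℕ) : SimpleGraph (Fin (k + 4)) :=
  SimpleGraph.fromRel (fun a b =>
    (a.val + 1 = b.val ∧ b.val ≤ k) ∨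
    (a.val = k + 1 ∧ b.val + 1 ≤ k) ∨
    (a.val = k + 1 ∧ b.val = k + 2) ∨
    (a.val = 0 ∧ b.val = k + 3))

/-- The `k`-tent (for `k ≥ 3`), with `k + 3` vertices: a chordless path
`p_0, …, p_{k-3}` (indices `0, …, k-3`), a vertex `a = k-2` adjacent to `p_0`,
a vertex `q = k-1` adjacent to `a` and to `p_0, …, p_{k-4}`, a pendant `r = k` on `q`,
a vertex `z = k+1` adjacent to `a` and `q`, and a hub `h = k+2` adjacent to every
vertex except `z`.  For `k = 3` this is the `3`-sun. -/
def kTent (k : ℕ) : SimpleGraph (Fin (k + 3)) :=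
  SimpleGraph.fromRel (fun x y =>
    (x.val + 1 = y.val ∧ y.val + 3 ≤ k) ∨
    (x.val + 2 = k ∧ y.val = 0) ∨
    (x.val + 2 = k ∧ y.val + 1 = k) ∨
    (x.val + 1 = k ∧ y.val + 4 ≤ k) ∨
    (x.val = k + 1 ∧ (y.val + 2 = k ∨ y.val + 1 = k)) ∨
    (x.val + 1 = k ∧ y.val = k) ∨
    (x.val = k + 2 ∧ y.val ≤ k))

/-- The Trotter–Moore graph `G_1` (as described in the source): vertices `x=0, y=1, z=2,
w₁=3, w₂=4` with edges `xy`, `yz`, and `w₁, w₂` each adjacent to `x`, `y`, `z`. -/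
def G1 : SimpleGraph (Fin 5) :=
  SimpleGraph.fromEdgeSet
    {s(0,1), s(1,2), s(3,0), s(3,1), s(3,2), s(4,0), s(4,1), s(4,2)}

/-- The Trotter–Moore graph `G_2`: a four-cycle `0-1-2-3`, a vertex `4` adjacent to `0`,
a vertex `5` adjacent to `2`, and the edge `4-5`. -/
def G2 : SimpleGraph (Fin 6) :=
  SimpleGraph.fromEdgeSet {s(0,1), s(1,2), s(2,3), s(3,0), s(4,0), s(5,2), s(4,5)}

/-- The Trotter–Moore graph `G_3`: a five-cycle `0-1-2-3-4` plus a vertex `5`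
adjacent to `0`, `2` and `3`. -/
def G3 : SimpleGraph (Fin 6) :=
  SimpleGraph.fromEdgeSet {s(0,1), s(1,2), s(2,3), s(3,4), s(4,0), s(5,0), s(5,2), s(5,3)}

/-- The Trotter–Moore graph `G_4`: a five-cycle `0-1-2-3-4`, a vertex `5` adjacent to `0`,
a vertex `6` adjacent to `2`, and the edge `5-6`. -/
def G4 : SimpleGraph (Fin 7) :=
  SimpleGraph.fromEdgeSet
    {s(0,1), s(1,2), s(2,3), s(3,4), s(4,0), s(5,0), s(6,2), s(5,6)}

/-- The domino: two four-cycles sharing an edge (`C_6` plus one long chord). -/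
def dominoG : SimpleGraph (Fin 6) :=
  SimpleGraph.fromEdgeSet {s(0,1), s(1,2), s(2,3), s(3,4), s(4,5), s(5,0), s(0,3)}

/-- The complement of the chordless six-cycle. -/
def C6bar : SimpleGraph (Fin 6) := (cycG 6)ᶜ

/-- Gimbel's graph `F_1`: a chordless path `0-1-2-3-4` together with a vertex `5`
whose only neighbor is the middle vertex `2` of the path. -/
def F1 : SimpleGraph (Fin 6) :=
  SimpleGraph.fromEdgeSet {s(0,1), s(1,2), s(2,3), s(3,4), s(5,2)}

/-- The set `A_i` with respect to a chordless cycle `c : Fin n → V`: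
vertices off the cycle adjacent to `v_{i-1}` and `v_i` having a neighbor `w`
adjacent to `v_i` but not to `v_{i-1}`. -/
def Aset {V : Type*} {n : ℕ} [NeZero n] (G : SimpleGraph V) (c : Fin n → V) (i : Fin n) : Set V :=
  {v | v ∉ Set.range c ∧ G.Adj v (c (i - 1)) ∧ G.Adj v (c i) ∧
    ∃ w, G.Adj v w ∧ G.Adj w (c i) ∧ ¬ G.Adj w (c (i - 1))}

/-- The set `B_i`: vertices off the cycle adjacent to `v_i` and `v_{i+1}` having a
neighbor `w` adjacent to `v_i` but not to `v_{i+1}`. -/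
def Bset {V : Type*} {n : ℕ} [NeZero n] (G : SimpleGraph V) (c : Fin n → V) (i : Fin n) : Set V :=
  {v | v ∉ Set.range c ∧ G.Adj v (c i) ∧ G.Adj v (c (i + 1)) ∧
    ∃ w, G.Adj v w ∧ G.Adj w (c i) ∧ ¬ G.Adj w (c (i + 1))}

/-- The set `O_i`: vertices off the cycle whose unique neighbor on the cycle is `v_i`. -/
def Oset {V : Type*} {n : ℕ} (G : SimpleGraph V) (c : Fin n → V) (i : Fin n) : Set V :=
  {v | v ∉ Set.range c ∧ ∀ j, G.Adj v (c j) ↔ j = i}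

/-- The set `T_i`: vertices off the cycle whose neighbors on the cycle are exactly
`v_i` and `v_{i+1}`, and which belong to neither `B_i` nor `A_{i+1}`. -/
def Tset {V : Type*} {n : ℕ} [NeZero n] (G : SimpleGraph V) (c : Fin n → V) (i : Fin n) : Set V :=
  {v | v ∉ Set.range c ∧ (∀ j, G.Adj v (c j) ↔ (j = i ∨ j = i + 1)) ∧
    v ∉ Bset G c i ∪ Aset G c (i + 1)}
/-!
Let `p - a - b - q` be the induced `P₄` with `a, b ∈ A_i`. As `A_i` and `B_i` are cliques, the
ends lie in `O_i ∪ B_i` and not both in `B_i`; reversing the path we may take `p ∈ O_i`. Then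
`a, b` see `v_{i-1}, v_i`, `p` sees only `v_i`, and `q` sees `v_i` but not `v_{i-1}` (for
`q ∈ B_i` this is because `q` would otherwise be adjacent to `p ∈ O_i`). According to which of
`q, a, b` see `v_{i-2}`, these seven vertices induce `G₁`, `C₄*`, a tent, a `4`-tent or a net.
-/

theorem cycG_adj_iff {n : ℕ} [NeZero n] {i j : Fin n} :
    (cycG n).Adj i j ↔ i ≠ j ∧ (i + 1 = j ∨ j + 1 = i) := by
  simp only [cycG, fromRel_adj, Fin.ext_iff, Fin.val_add, Fin.val_one', Nat.add_mod_mod]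

open Fin.CommRing in
theorem Fin.natCast_ne_zero_of_lt {n k : ℕ} [NeZero n] (h0 : 0 < k) (hk : k < n) :
    (k : Fin n) ≠ 0 := by
  rw [Ne, Fin.natCast_eq_zero]
  exact Nat.not_dvd_of_pos_of_lt h0 hk

open Fin.CommRing in
theorem cycG_adj_sub_one {n : ℕ} [NeZero n] (hn : 2 ≤ n) (j : Fin n) :
    (cycG n).Adj (j - 1) j := by
  refine cycG_adj_iff.2 ⟨fun h => ?_, Or.inl (sub_add_cancel j 1)⟩
  have : ((1 : ℕ) : Fin n) = 0 := by push_cast; linear_combination -h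
  exact Fin.natCast_ne_zero_of_lt one_pos (by omega) this

open Fin.CommRing in
theorem Fin.sub_one_sub_one_ne_self {n : ℕ} [NeZero n] (hn : 3 ≤ n) (j : Fin n) :
    j - 1 - 1 ≠ j := by
  intro h
  have : ((2 : ℕ) : Fin n) = 0 := by push_cast; linear_combination -h
  exact Fin.natCast_ne_zero_of_lt two_pos (by omega) this

open Fin.CommRing in
theorem cycG_not_adj_sub_two {n : ℕ} [NeZero n] (hn : 4 ≤ n) (j : Fin n) :
    ¬ (cycG n).Adj (j - 1 - 1) j := by
  rw [cycG_adj_iff]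
  rintro ⟨-, h | h⟩
  · rw [sub_add_cancel] at h
    exact (cycG_adj_sub_one (by omega) j).ne h
  · have : ((3 : ℕ) : Fin n) = 0 := by push_cast; linear_combination h
    exact Fin.natCast_ne_zero_of_lt three_pos (by omega) this

theorem pathG_four_adj {V : Type*} {G : SimpleGraph V} (f : pathG 4 ↪g G) :
    G.Adj (f 0) (f 1) ∧ G.Adj (f 1) (f 2) ∧ G.Adj (f 2) (f 3) ∧
      ¬ G.Adj (f 0) (f 2) ∧ ¬ G.Adj (f 0) (f 3) ∧ ¬ G.Adj (f 1) (f 3) := by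
  simp only [f.map_rel_iff]
  simp [pathG]

theorem hasInduced_of_adj_iff {W V : Type*} {H : SimpleGraph W} {G : SimpleGraph V}
    (φ : W → V) (hφ : Function.Injective φ)
    (hadj : ∀ x y, G.Adj (φ x) (φ y) ↔ H.Adj x y) : HasInduced H G :=
  ⟨⟨⟨φ, hφ⟩, hadj _ _⟩⟩

set_option maxHeartbeats 1000000 in
theorem hasInduced_of_P4_over_P3 {V : Type*} {G : SimpleGraph V} {p a b q u v w : V}
    (hpa : G.Adj p a) (hab : G.Adj a b) (hbq : G.Adj b q)
    (hpb : ¬ G.Adj p b) (hpq : ¬ G.Adj p q) (haq : ¬ G.Adj a q)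
    (huv : G.Adj u v) (hvw : G.Adj v w) (huw : ¬ G.Adj u w)
    (hav : G.Adj a v) (haw : G.Adj a w) (hbv : G.Adj b v) (hbw : G.Adj b w)
    (hpu : ¬ G.Adj p u) (hpv : ¬ G.Adj p v) (hpw : G.Adj p w)
    (hqv : ¬ G.Adj q v) (hqw : G.Adj q w) :
    HasInduced netG G ∨ HasInduced tentG G ∨ HasInduced (kTent 4) G ∨
      HasInduced (cycStar 4) G ∨ HasInduced G1 G := by
  by_cases hqu : G.Adj q u
  · by_cases hbu : G.Adj b u
    · refine Or.inr <| Or.inr <| Or.inr <| Or.inr <|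
        hasInduced_of_adj_iff ![q, b, v, w, u] ?_ ?_
      · intro x y h
        fin_cases x <;> fin_cases y <;> simp_all [G.adj_comm]
      · intro x y
        fin_cases x <;> fin_cases y <;> simp_all [G1, G.adj_comm]
    · refine Or.inr <| Or.inr <| Or.inr <| Or.inl <|
        hasInduced_of_adj_iff (fun o => o.elim p ![b, q, u, v]) ?_ ?_
      · rintro (_ | x) (_ | y) h
        all_goals try fin_cases x
        all_goals try fin_cases y
        all_goals simp_all [G.adj_comm]
      · rintro (_ | x) (_ | y)
        all_goals try fin_cases x
        all_goals try fin_cases y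
        all_goals simp_all [cycStar, addIsolated, cycG, G.adj_comm]
  · by_cases hau : G.Adj a u <;> by_cases hbu : G.Adj b u
    · refine Or.inr <| Or.inl <| hasInduced_of_adj_iff ![a, b, w, u, q, p] ?_ ?_
      · intro x y h
        fin_cases x <;> fin_cases y <;> simp_all [G.adj_comm]
      · intro x y
        fin_cases x <;> fin_cases y <;> simp_all [tentG, G.adj_comm]
    · refine Or.inr <| Or.inr <| Or.inl <| hasInduced_of_adj_iff ![b, q, v, a, p, u, w] ?_ ?_
      · intro x y h
        fin_cases x <;> fin_cases y <;> simp_all [G.adj_comm]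
      · intro x y
        fin_cases x <;> fin_cases y <;> simp_all [kTent, G.adj_comm]
    · refine Or.inr <| Or.inr <| Or.inl <| hasInduced_of_adj_iff ![a, p, v, b, q, u, w] ?_ ?_
      · intro x y h
        fin_cases x <;> fin_cases y <;> simp_all [G.adj_comm]
      · intro x y
        fin_cases x <;> fin_cases y <;> simp_all [kTent, G.adj_comm]
    · refine Or.inl <| hasInduced_of_adj_iff ![a, b, v, p, q, u] ?_ ?_
      · intro x y h
        fin_cases x <;> fin_cases y <;> simp_all [G.adj_comm]
      · intro x y
        fin_cases x <;> fin_cases y <;> simp_all [netG, G.adj_comm]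

theorem hasInduced_of_P4_from_Oset {V : Type*} {G : SimpleGraph V} {n : ℕ} [NeZero n]
    (hn : 4 ≤ n) (c : cycG n ↪g G) {i : Fin n}
    (hoadj : ∀ u, G.Adj u (c (i - 1)) → G.Adj u (c i) → G.Adj u (c (i + 1)) →
      ∀ o ∈ Oset G ⇑c i, G.Adj u o)
    {p a b q : V} (hp : p ∈ Oset G ⇑c i) (ha : a ∈ Aset G ⇑c i) (hb : b ∈ Aset G ⇑c i)
    (hq : q ∈ Oset G ⇑c i ∪ Bset G ⇑c i)
    (hpa : G.Adj p a) (hab : G.Adj a b) (hbq : G.Adj b q)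
    (hpb : ¬ G.Adj p b) (hpq : ¬ G.Adj p q) (haq : ¬ G.Adj a q) :
    HasInduced netG G ∨ HasInduced tentG G ∨ HasInduced (kTent 4) G ∨
      HasInduced (cycStar 4) G ∨ HasInduced G1 G := by
  have hcyc := cycG_adj_sub_one (by omega : 2 ≤ n)
  have huv : G.Adj (c (i - 1 - 1)) (c (i - 1)) := c.map_rel_iff.2 (hcyc _)
  have hvw : G.Adj (c (i - 1)) (c i) := c.map_rel_iff.2 (hcyc i)
  have huw : ¬ G.Adj (c (i - 1 - 1)) (c i) :=
    fun h => cycG_not_adj_sub_two hn i (c.map_rel_iff.1 h)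
  have hO : ∀ {x}, x ∈ Oset G ⇑c i → ∀ {j}, j ≠ i → ¬ G.Adj x (c j) :=
    fun hx _ hj h => hj ((hx.2 _).1 h)
  have hqv : ¬ G.Adj q (c (i - 1)) := by
    rcases hq with hq | hq
    · exact hO hq (hcyc i).ne
    · exact fun h => hpq (hoadj q h hq.2.1 hq.2.2.1 p hp).symm
  have hqw : G.Adj q (c i) := by
    rcases hq with hq | hq
    exacts [(hq.2 i).2 rfl, hq.2.1]
  exact hasInduced_of_P4_over_P3 hpa hab hbq hpb hpq haq huv hvw huw ha.2.1 ha.2.2.1 hb.2.1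
    hb.2.2.1 (hO hp (Fin.sub_one_sub_one_ne_self (by omega) i)) (hO hp (hcyc i).ne)
    ((hp.2 i).2 rfl) hqv hqw

theorem stmt17_general {V : Type*} (G : SimpleGraph V)
    (hnet : ¬ HasInduced netG G)
    (htent : ¬ HasInduced tentG G) (h4tent : ¬ HasInduced (kTent 4) G)
    (hstar4 : ¬ HasInduced (cycStar 4) G) (hG1 : ¬ HasInduced G1 G)
    {n : ℕ} [NeZero n] (hn : 4 ≤ n) (c : cycG n ↪g G) (i : Fin n)
    (hAclique : G.IsClique (Aset G ⇑c i)) (hBclique : G.IsClique (Bset G ⇑c i))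
    (hoadj : ∀ u, G.Adj u (c (i - 1)) → G.Adj u (c i) → G.Adj u (c (i + 1)) →
      ∀ o ∈ Oset G ⇑c i, G.Adj u o) :
    ¬ ∃ f : pathG 4 ↪g G,
      Set.range ⇑f ⊆ Aset G ⇑c i ∪ Oset G ⇑c i ∪ Bset G ⇑c i ∧
      f 1 ∈ Aset G ⇑c i ∧ f 2 ∈ Aset G ⇑c i := by
  rintro ⟨f, hsub, ha, hb⟩
  obtain ⟨h01, h12, h23, h02, h03, h13⟩ := pathG_four_adj f
  have hne : ∀ {x y : Fin 4}, x ≠ y → f x ≠ f y := f.injective.ne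
  have hp : f 0 ∈ Oset G ⇑c i ∪ Bset G ⇑c i := by
    rcases hsub ⟨0, rfl⟩ with (hA | hO) | hB
    exacts [(h02 (hAclique hA hb (hne (by decide)))).elim, .inl hO, .inr hB]
  have hq : f 3 ∈ Oset G ⇑c i ∪ Bset G ⇑c i := by
    rcases hsub ⟨3, rfl⟩ with (hA | hO) | hB
    exacts [(h13 (hAclique ha hA (hne (by decide)))).elim, .inl hO, .inr hB]
  have hforbidden : HasInduced netG G ∨ HasInduced tentG G ∨ HasInduced (kTent 4) G ∨
      HasInduced (cycStar 4) G ∨ HasInduced G1 G := by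
    rcases hp with hpO | hpB
    · exact hasInduced_of_P4_from_Oset hn c hoadj hpO ha hb hq h01 h12 h23 h02 h03 h13
    rcases hq with hqO | hqB
    · exact hasInduced_of_P4_from_Oset hn c hoadj hqO hb ha (.inr hpB) h23.symm h12.symm
        h01.symm (h13 ∘ .symm) (h03 ∘ .symm) (h02 ∘ .symm)
    · exact (h03 (hBclique hpB hqB (hne (by decide)))).elim
  rcases hforbidden with h | h | h | h | h
  exacts [hnet h, htent h, h4tent h, hstar4 h, hG1 h]

/-- Claim 5 of the paper, `A_i` case: under the stated forbidden
induced subgraphs and structural facts, no two vertices of `A_i` are the two internal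
vertices of an induced `P_4` of `G[A_i ∪ O_i ∪ B_i]`. -/
theorem stmt17 {V : Type*} [Finite V] (G : SimpleGraph V)
    (hnet : ¬ HasInduced netG G)
    (h4w : ¬ HasInduced (wheelG 4) G) (h5w : ¬ HasInduced (wheelG 5) G)
    (htent : ¬ HasInduced tentG G) (h4tent : ¬ HasInduced (kTent 4) G)
    (hknet : ∀ k, 2 ≤ k → ¬ HasInduced (kNet k) G)
    (hstar4 : ¬ HasInduced (cycStar 4) G) (hG1 : ¬ HasInduced G1 G)
    {n : ℕ} [NeZero n] (hn : 4 ≤ n) (c : cycG n ↪g G) (i : Fin n)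
    (hAclique : G.IsClique (Aset G ⇑c i)) (hBclique : G.IsClique (Bset G ⇑c i))
    (hoadj : ∀ u, G.Adj u (c (i - 1)) → G.Adj u (c i) → G.Adj u (c (i + 1)) →
      ∀ o ∈ Oset G ⇑c i, G.Adj u o) :
    ¬ ∃ f : pathG 4 ↪g G,
      Set.range ⇑f ⊆ Aset G ⇑c i ∪ Oset G ⇑c i ∪ Bset G ⇑c i ∧
      f 1 ∈ Aset G ⇑c i ∧ f 2 ∈ Aset G ⇑c i :=
  stmt17_general G hnet htent h4tent hstar4 hG1 hn c i hAclique hBclique hoadj
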